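/- Let G be a triangle-free and quadrangle-free connected graph with n ≥ 2 vertices and m edges. Then DE(G) ≥ 2·[3(n − 1) − 2m/n − M₁(G)/n], where M₁(G) = Σ_i d_i² is the first Zagreb index of G. -/

import Mathlib

open SimpleGraph Finset

/-- The distance matrix of a graph `G`: the `(i,j)` entry is the graph distance
between `i` and `j`, as a real number. -/
noncomputable def distMatrix {V : Type*} [Fintype V] (G : SimpleGraph V) : Matrix V V ℝ :=
  fun i j => (G.dist i j : ℝ)

lemma distMatrix_isHermitian {V : Type*} [Fintype V] (G : SimpleGraph V) :
    (distMatrix G).IsHermitian := by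
  unfold Matrix.IsHermitian
  ext i j
  simp [distMatrix, Matrix.conjTranspose_apply, SimpleGraph.dist_comm]

/-- The distance spectral radius of `G`: the largest eigenvalue of the distance matrix. -/
noncomputable def distSpectralRadius {V : Type*} [Fintype V] [DecidableEq V]
    (G : SimpleGraph V) : ℝ :=
  ⨆ i, (distMatrix_isHermitian G).eigenvalues i

/-- The distance energy of `G`: the sum of the absolute values of the eigenvalues of
the distance matrix. -/
noncomputable def distEnergy {V : Type*} [Fintype V] [DecidableEq V]
    (G : SimpleGraph V) : ℝ :=
  ∑ i, |(distMatrix_isHermitian G).eigenvalues i|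

/-!
Since `D(G)` has zero trace, `DE(G) = 2 ∑ₖ λₖ⁺`, and expanding the all-ones vector `𝟙` in an
orthonormal eigenbasis gives `𝟙ᵀ D(G) 𝟙 ≤ n ∑ₖ λₖ⁺`; hence `DE(G) ≥ 2W/n` for the Wiener-type sum
`W = ∑ᵤ ∑ᵥ d(u, v)`. Conversely, distinct vertices at distance `≠ 1, 2` are at distance `≥ 3`,
and ordered pairs at distance `2` are ends of paths `u w v`, of which there are
`∑ d_w (d_w - 1) = M₁(G) - 2m`; so `W ≥ 3n(n - 1) - 2m - M₁(G)`.
-/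

namespace Matrix.IsHermitian

variable {ι : Type*} [Fintype ι] [DecidableEq ι] {A : Matrix ι ι ℝ} (hA : A.IsHermitian)

lemma apply_eq_sum_eigenvalues (i j : ι) :
    A i j = ∑ k, hA.eigenvectorUnitary i k * hA.eigenvalues k * hA.eigenvectorUnitary j k := by
  conv_lhs => rw [hA.spectral_theorem]
  simp [Matrix.mul_apply, Matrix.diagonal_apply, Matrix.star_apply, mul_ite]

lemma sum_eigenvectorUnitary_sq (k : ι) : ∑ i, hA.eigenvectorUnitary i k ^ 2 = 1 := by
  have h := congrFun₂ (Matrix.mem_unitaryGroup_iff'.mp hA.eigenvectorUnitary.2) k k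
  simpa [Matrix.mul_apply, sq] using h

lemma sum_apply_eq_sum_eigenvalues_mul_sq :
    ∑ i, ∑ j, A i j = ∑ k, hA.eigenvalues k * (∑ i, hA.eigenvectorUnitary i k) ^ 2 := by
  simp only [hA.apply_eq_sum_eigenvalues, sq, mul_sum, sum_mul]
  rw [sum_comm_cycle]
  refine sum_congr rfl fun k _ => ?_
  rw [sum_comm]
  exact sum_congr rfl fun _ _ => sum_congr rfl fun _ _ => by ring

lemma sum_apply_le_card_mul_sum_posPart :
    ∑ i, ∑ j, A i j ≤ Fintype.card ι * ∑ k, (hA.eigenvalues k)⁺ := by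
  rw [hA.sum_apply_eq_sum_eigenvalues_mul_sq, mul_sum]
  refine sum_le_sum fun k _ => ?_
  have hcol : (∑ i, hA.eigenvectorUnitary i k) ^ 2 ≤ Fintype.card ι := by
    have := sq_sum_le_card_mul_sum_sq (s := univ) (f := fun i => hA.eigenvectorUnitary i k)
    rwa [hA.sum_eigenvectorUnitary_sq k, mul_one, card_univ] at this
  calc hA.eigenvalues k * (∑ i, hA.eigenvectorUnitary i k) ^ 2
      ≤ (hA.eigenvalues k)⁺ * (∑ i, hA.eigenvectorUnitary i k) ^ 2 :=
        mul_le_mul_of_nonneg_right (le_posPart _) (sq_nonneg _)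
    _ ≤ (hA.eigenvalues k)⁺ * Fintype.card ι :=
        mul_le_mul_of_nonneg_left hcol (posPart_nonneg _)
    _ = _ := mul_comm _ _

lemma sum_abs_eigenvalues_eq_two_mul_sum_posPart (h : A.trace = 0) :
    ∑ k, |hA.eigenvalues k| = 2 * ∑ k, (hA.eigenvalues k)⁺ := by
  have htr : ∑ k, hA.eigenvalues k = 0 := by
    simpa [hA.trace_eq_sum_eigenvalues] using h
  calc ∑ k, |hA.eigenvalues k|
      = ∑ k, (2 * (hA.eigenvalues k)⁺ - hA.eigenvalues k) := by
        refine sum_congr rfl fun k _ => ?_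
        linarith [posPart_add_negPart (hA.eigenvalues k), posPart_sub_negPart (hA.eigenvalues k)]
    _ = _ := by rw [sum_sub_distrib, ← mul_sum, htr, sub_zero]

end Matrix.IsHermitian

namespace SimpleGraph

variable {V : Type*} (G : SimpleGraph V)

lemma exists_adj_adj_of_dist_eq_two {u v : V} (h : G.dist u v = 2) :
    ∃ w, G.Adj u w ∧ G.Adj w v := by
  have hreach : G.Reachable u v := Reachable.of_dist_ne_zero (by omega)
  have hedist : G.edist u v = 2 := by rw [← hreach.coe_dist_eq_edist, h]; rfl
  obtain ⟨w, hw⟩ := (edist_eq_two_iff.mp hedist).2.2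
  rw [mem_commonNeighbors] at hw
  exact ⟨w, hw.1, hw.2.symm⟩

lemma card_dist_eq_two_add_two_mul_card_edgeFinset_le [Fintype V] [DecidableRel G.Adj] :
    #{p : V × V | G.dist p.1 p.2 = 2} + 2 * #G.edgeFinset ≤ ∑ v, G.degree v ^ 2 := by
  have hcard_le : #{p : V × V | G.dist p.1 p.2 = 2} ≤
      #((univ : Finset V).sigma fun w => (G.neighborFinset w).offDiag) := by
    refine card_le_card_of_surjOn (fun x => x.2) fun p hp => ?_
    have hp : G.dist p.1 p.2 = 2 := by simpa using hp
    obtain ⟨w, hw₁, hw₂⟩ := G.exists_adj_adj_of_dist_eq_two hp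
    have hne : p.1 ≠ p.2 := fun h => by simp [h] at hp
    exact ⟨⟨w, p⟩, by simpa [hne] using ⟨hw₁.symm, hw₂⟩, rfl⟩
  have hoffDiag : ∀ w, #(G.neighborFinset w).offDiag + G.degree w = G.degree w ^ 2 := by
    intro w
    rw [offDiag_card, card_neighborFinset_eq_degree, sq]
    exact Nat.sub_add_cancel (Nat.le_mul_self _)
  rw [← sum_degrees_eq_twice_card_edges, ← sum_congr rfl fun w _ => hoffDiag w,
    sum_add_distrib, ← card_sigma]
  omega

lemma three_le_dist_add_ite [DecidableEq V] [DecidableRel G.Adj] (hconn : G.Connected) (u v : V) :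
    3 ≤ G.dist u v + (if u = v then 3 else 0) + (if G.Adj u v then 2 else 0) +
      (if G.dist u v = 2 then 1 else 0) := by
  by_cases huv : u = v
  · simp [huv]
  by_cases hadj : G.Adj u v
  · simp [huv, hadj, dist_eq_one_iff_adj.mpr hadj]
  have := hconn.one_lt_dist_of_ne_of_not_adj huv hadj
  split_ifs <;> omega

lemma three_mul_card_sq_le_sum_dist [Fintype V] [DecidableEq V] [DecidableRel G.Adj]
    (hconn : G.Connected) :
    3 * Fintype.card V ^ 2 ≤ ∑ u, ∑ v, G.dist u v + 3 * Fintype.card V +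
      2 * #G.edgeFinset + ∑ v, G.degree v ^ 2 := by
  have hsum := sum_le_sum fun u (_ : u ∈ univ) =>
    sum_le_sum fun v (_ : v ∈ univ) => G.three_le_dist_add_ite hconn u v
  have hdiag : ∑ u : V, ∑ v : V, (if u = v then 3 else 0) = 3 * Fintype.card V := by
    simp [mul_comm]
  have hadj : ∑ u : V, ∑ v : V, (if G.Adj u v then 2 else 0) = 2 * (2 * #G.edgeFinset) := by
    rw [← sum_degrees_eq_twice_card_edges, mul_sum]
    refine sum_congr rfl fun u _ => ?_
    rw [← sum_filter, sum_const, ← neighborFinset_eq_filter, card_neighborFinset_eq_degree,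
      smul_eq_mul, mul_comm]
  have hdist2 : ∑ u : V, ∑ v : V, (if G.dist u v = 2 then 1 else 0) =
      #{p : V × V | G.dist p.1 p.2 = 2} := by
    rw [card_filter, ← univ_product_univ, sum_product]
  simp only [sum_add_distrib, sum_const, card_univ, smul_eq_mul] at hsum
  have := G.card_dist_eq_two_add_two_mul_card_edgeFinset_le
  rw [hdiag, hadj, hdist2] at hsum
  linarith

end SimpleGraph

lemma trace_distMatrix {V : Type*} [Fintype V] (G : SimpleGraph V) :
    (distMatrix G).trace = 0 := by
  simp [Matrix.trace, distMatrix]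

section DistanceMatrix

variable {V : Type*} [Fintype V] [DecidableEq V] (G : SimpleGraph V)

lemma distEnergy_eq_two_mul_sum_posPart :
    distEnergy G = 2 * ∑ k, ((distMatrix_isHermitian G).eigenvalues k)⁺ :=
  (distMatrix_isHermitian G).sum_abs_eigenvalues_eq_two_mul_sum_posPart (trace_distMatrix G)

lemma two_mul_sum_dist_le_card_mul_distEnergy :
    2 * ∑ u, ∑ v, (G.dist u v : ℝ) ≤ Fintype.card V * distEnergy G := by
  rw [distEnergy_eq_two_mul_sum_posPart, mul_left_comm]
  exact mul_le_mul_of_nonneg_left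
    (distMatrix_isHermitian G).sum_apply_le_card_mul_sum_posPart zero_le_two

end DistanceMatrix

theorem distEnergy_ge_zagreb_general {n : ℕ} (hn : 2 ≤ n) (G : SimpleGraph (Fin n))
    [DecidableRel G.Adj] (hconn : G.Connected)
    (m : ℕ) (hm : G.edgeFinset.card = m) :
    2 * (3 * ((n : ℝ) - 1) - 2 * (m : ℝ) / (n : ℝ) -
        (∑ i : Fin n, (G.degree i : ℝ) ^ 2) / (n : ℝ)) ≤
      distEnergy G := by
  have hn₀ : (0 : ℝ) < n := Nat.cast_pos.mpr (by omega)
  have hdist : (3 * n ^ 2 : ℝ) ≤ ∑ u, ∑ v, (G.dist u v : ℝ) + 3 * n + 2 * m +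
      ∑ i, (G.degree i : ℝ) ^ 2 := by
    simpa [← hm] using (Nat.cast_le (α := ℝ)).mpr (G.three_mul_card_sq_le_sum_dist hconn)
  have henergy := two_mul_sum_dist_le_card_mul_distEnergy G
  rw [Fintype.card_fin] at henergy
  calc 2 * (3 * ((n : ℝ) - 1) - 2 * (m : ℝ) / n - (∑ i, (G.degree i : ℝ) ^ 2) / n)
      = 2 * (3 * n ^ 2 - 3 * n - 2 * m - ∑ i, (G.degree i : ℝ) ^ 2) / n := by
        field_simp
    _ ≤ distEnergy G := by
        rw [div_le_iff₀ hn₀]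
        linarith

/-- For a triangle-free and quadrangle-free connected graph `G` with `n ≥ 2` vertices
and `m` edges, `DE(G) ≥ 2[3(n-1) - 2m/n - M₁(G)/n]`, where `M₁(G) = Σᵢ dᵢ²` is the
first Zagreb index. -/
theorem distEnergy_ge_zagreb {n : ℕ} (hn : 2 ≤ n) (G : SimpleGraph (Fin n))
    [DecidableRel G.Adj] (hconn : G.Connected)
    (htri : ∀ (x : Fin n) (c : G.Walk x x), c.IsCycle → c.length ≠ 3)
    (hquad : ∀ (x : Fin n) (c : G.Walk x x), c.IsCycle → c.length ≠ 4)
    (m : ℕ) (hm : G.edgeFinset.card = m) :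
    2 * (3 * ((n : ℝ) - 1) - 2 * (m : ℝ) / (n : ℝ) -
        (∑ i : Fin n, (G.degree i : ℝ) ^ 2) / (n : ℝ)) ≤
      distEnergy G :=
  distEnergy_ge_zagreb_general hn G hconn m hm
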